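/- arXiv:2203.06645 — 6 statements merged into one kernel-verified Lean document; each statement's English description precedes it below -/
import Mathlib

section
/- For every x ∈ E₁ ⊗ E₂, one has B(x, x) = 0 if and only if x is a simple tensor, i.e., x = e₁ ⊗ e₂ for some e₁ ∈ E₁ and e₂ ∈ E₂. -/
/-!
Choose bases `u₀, u₁` of `E₁` and `v₀, v₁` of `E₂` and write
`x = a u₀⊗v₀ + b u₀⊗v₁ + c u₁⊗v₀ + d u₁⊗v₁`. Since `ω₁, ω₂` are alternating, only the cross
terms survive in `B(x, x)`, which equals `2 ω₁(u₀,u₁) ω₂(v₀,v₁) (ad - bc)`. A nonzero alternating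
form on a plane does not vanish on a basis and `2 ≠ 0`, so `B(x, x) = 0` exactly when the
coefficient matrix is singular, i.e. when `x` has rank at most one.
-/

open TensorProduct

namespace LinearMap.IsAlt

variable {R M N : Type*} [CommRing R] [AddCommGroup M] [Module R M] [AddCommGroup N] [Module R N]

theorem apply_basis_zero_one_ne_zero {ω : M →ₗ[R] M →ₗ[R] N}
    (hω : ω.IsAlt) (hne : ω ≠ 0) (b : Module.Basis (Fin 2) R M) : ω (b 0) (b 1) ≠ 0 := by
  intro h01
  have h10 : ω (b 1) (b 0) = 0 := by rw [← hω.neg, h01, neg_zero]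
  refine hne (LinearMap.ext_basis b b fun i j => ?_)
  fin_cases i <;> fin_cases j <;> simp [hω.self_eq_zero, h01, h10]

end LinearMap.IsAlt

namespace TensorProduct

variable {R M N : Type*} [CommRing R] [AddCommGroup M] [Module R M] [AddCommGroup N] [Module R N]

theorem exists_eq_sum_smul_tmul_basis_fin_two (b₁ : Module.Basis (Fin 2) R M)
    (b₂ : Module.Basis (Fin 2) R N) (x : M ⊗[R] N) :
    ∃ a b c d : R, x = a • (b₁ 0 ⊗ₜ b₂ 0) + b • (b₁ 0 ⊗ₜ b₂ 1) + c • (b₁ 1 ⊗ₜ b₂ 0)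
      + d • (b₁ 1 ⊗ₜ b₂ 1) := by
  set bT := b₁.tensorProduct b₂
  refine ⟨bT.repr x (0, 0), bT.repr x (0, 1), bT.repr x (1, 0), bT.repr x (1, 1), ?_⟩
  conv_lhs => rw [← bT.sum_repr x]
  simp only [Fintype.sum_prod_type, Fin.sum_univ_two, bT, Module.Basis.tensorProduct_apply]
  abel

theorem apply_sum_smul_tmul_self {ω₁ : M →ₗ[R] M →ₗ[R] R} {ω₂ : N →ₗ[R] N →ₗ[R] R}
    (hω₁ : ω₁.IsAlt) (hω₂ : ω₂.IsAlt) {B : M ⊗[R] N →ₗ[R] M ⊗[R] N →ₗ[R] R}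
    (hB : ∀ m m' n n', B (m ⊗ₜ n) (m' ⊗ₜ n') = ω₁ m m' * ω₂ n n')
    (u₀ u₁ : M) (v₀ v₁ : N) (a b c d : R) :
    let x := a • (u₀ ⊗ₜ v₀) + b • (u₀ ⊗ₜ v₁) + c • (u₁ ⊗ₜ v₀) + d • (u₁ ⊗ₜ v₁)
    B x x = 2 * ω₁ u₀ u₁ * ω₂ v₀ v₁ * (a * d - b * c) := by
  have h₁ := hω₁.neg u₀ u₁
  have h₂ := hω₂.neg v₀ v₁
  simp only [map_add, map_smul, LinearMap.add_apply, LinearMap.smul_apply, hB,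
    hω₁.self_eq_zero, hω₂.self_eq_zero, ← h₁, ← h₂, smul_eq_mul]
  ring

theorem exists_eq_tmul_of_mul_eq_mul {K : Type*} [Field K] [Module K M] [Module K N]
    (u₀ u₁ : M) (v₀ v₁ : N) {a b c d : K} (h : a * d = b * c) :
    ∃ (u : M) (v : N),
      a • (u₀ ⊗ₜ[K] v₀) + b • (u₀ ⊗ₜ v₁) + c • (u₁ ⊗ₜ v₀) + d • (u₁ ⊗ₜ v₁) = u ⊗ₜ v := by
  by_cases ha : a = 0
  · obtain hb | hc := mul_eq_zero.mp (h.symm.trans (by rw [ha, zero_mul]))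
    · exact ⟨u₁, c • v₀ + d • v₁, by simp [ha, hb, tmul_add, tmul_smul]⟩
    · exact ⟨b • u₀ + d • u₁, v₁, by simp [ha, hc, add_tmul, smul_tmul']⟩
  · refine ⟨a • u₀ + c • u₁, v₀ + (b / a) • v₁, ?_⟩
    simp only [tmul_add, add_tmul, tmul_smul, ← smul_tmul']
    match_scalars <;> field_simp
    linear_combination h

end TensorProduct

/-- For the orthogonal form `B` on `E₁ ⊗ E₂` (with `E₁, E₂` two-dimensional and `ω₁, ω₂` nonzero
alternating forms), a vector `x` is isotropic (`B(x,x) = 0`) if and only if `x` is a simple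
tensor. -/
theorem stmt_1 (K : Type*) [Field K] (hK2 : (2 : K) ≠ 0)
    (E₁ E₂ : Type*) [AddCommGroup E₁] [Module K E₁] [AddCommGroup E₂] [Module K E₂]
    [FiniteDimensional K E₁] [FiniteDimensional K E₂]
    (hE₁ : Module.finrank K E₁ = 2) (hE₂ : Module.finrank K E₂ = 2)
    (ω₁ : E₁ →ₗ[K] E₁ →ₗ[K] K) (ω₂ : E₂ →ₗ[K] E₂ →ₗ[K] K)
    (hω₁alt : ∀ x, ω₁ x x = 0) (hω₂alt : ∀ y, ω₂ y y = 0)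
    (hω₁ne : ω₁ ≠ 0) (hω₂ne : ω₂ ≠ 0)
    (B : E₁ ⊗[K] E₂ →ₗ[K] E₁ ⊗[K] E₂ →ₗ[K] K)
    (hB : ∀ (e₁ f₁ : E₁) (e₂ f₂ : E₂),
      B (e₁ ⊗ₜ[K] e₂) (f₁ ⊗ₜ[K] f₂) = ω₁ e₁ f₁ * ω₂ e₂ f₂) :
    ∀ x : E₁ ⊗[K] E₂, B x x = 0 ↔ ∃ (e₁ : E₁) (e₂ : E₂), x = e₁ ⊗ₜ[K] e₂ := by
  intro x
  constructor
  · intro hx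
    let b₁ := Module.finBasisOfFinrankEq K E₁ hE₁
    let b₂ := Module.finBasisOfFinrankEq K E₂ hE₂
    obtain ⟨a, b, c, d, rfl⟩ := exists_eq_sum_smul_tmul_basis_fin_two b₁ b₂ x
    rw [apply_sum_smul_tmul_self hω₁alt hω₂alt hB] at hx
    have hdet : a * d - b * c = 0 := by
      simpa [hK2, LinearMap.IsAlt.apply_basis_zero_one_ne_zero hω₁alt hω₁ne b₁,
        LinearMap.IsAlt.apply_basis_zero_one_ne_zero hω₂alt hω₂ne b₂] using hx
    exact exists_eq_tmul_of_mul_eq_mul _ _ _ _ (sub_eq_zero.mp hdet)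
  · rintro ⟨e₁, e₂, rfl⟩
    rw [hB, hω₁alt, zero_mul]
end

section
/- Let Ψ : E₁ ⊗ E₂ → Hom_K(E₁, E₂) be the linear map determined on simple tensors by Ψ(e₁ ⊗ e₂)(x) = ω₁(x, e₁) · e₂. Then Ψ is a linear isomorphism, and for every v ∈ E₁ ⊗ E₂: B(v, v) = 0 if and only if the linear map Ψ(v) has rank at most 1, and B(v, v) ≠ 0 if and only if Ψ(v) : E₁ → E₂ is bijective. -/
/-!
Choose a basis `a, b` of `E₁` with `ω₁ a b = 1`. Then `w = ω₁ a w • b - ω₁ b w • a` for all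
`w : E₁`, hence `v = b ⊗ Ψ v a - a ⊗ Ψ v b` for every tensor `v`. This shows that `Ψ` is injective
(so bijective, both sides having dimension 4) and that `B v v = 2 ω₂ (Ψ v a) (Ψ v b)`. A nonzero
alternating form on a plane pairs two vectors nontrivially exactly when they are independent, and
`Ψ v a, Ψ v b` span the range of `Ψ v`; so `B v v ≠ 0` iff `Ψ v` has rank 2.
-/

open TensorProduct Module

namespace LinearMap.IsAlt

variable {K V : Type*} [Field K] [AddCommGroup V] [Module K V] {ω : V →ₗ[K] V →ₗ[K] K}

theorem linearIndependent_pair (hω : ω.IsAlt) {x y : V} (hxy : ω x y ≠ 0) :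
    LinearIndependent K ![x, y] := by
  refine LinearIndependent.pair_iff.mpr fun s t hst => ⟨?_, ?_⟩
  · have h := congrArg (fun z => ω z y) hst
    simp only [map_add, map_smul, LinearMap.add_apply, LinearMap.smul_apply, hω.self_eq_zero,
      smul_eq_mul, mul_zero, add_zero, map_zero, LinearMap.zero_apply] at h
    exact (mul_eq_zero.mp h).resolve_right hxy
  · have h := congrArg (fun z => ω x z) hst
    simp only [map_add, map_smul, hω.self_eq_zero, smul_eq_mul, mul_zero, zero_add,
      map_zero] at h
    exact (mul_eq_zero.mp h).resolve_right hxy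

theorem apply_ne_zero_of_linearIndependent_pair (hω : ω.IsAlt) (hω0 : ω ≠ 0)
    (hV : finrank K V = 2) {x y : V} (hxy : LinearIndependent K ![x, y]) : ω x y ≠ 0 := by
  intro h0
  let e := basisOfLinearIndependentOfCardEqFinrank hxy (by simp [hV])
  refine hω0 (e.ext fun i => e.ext fun j => ?_)
  fin_cases i <;> fin_cases j <;>
    simp [e, coe_basisOfLinearIndependentOfCardEqFinrank, hω.self_eq_zero, h0, ← hω.neg x y]

theorem apply_ne_zero_iff_linearIndependent_pair (hω : ω.IsAlt) (hω0 : ω ≠ 0)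
    (hV : finrank K V = 2) {x y : V} : ω x y ≠ 0 ↔ LinearIndependent K ![x, y] :=
  ⟨hω.linearIndependent_pair, hω.apply_ne_zero_of_linearIndependent_pair hω0 hV⟩

theorem exists_basis_apply_eq_one (hω : ω.IsAlt) (hω0 : ω ≠ 0) (hV : finrank K V = 2) :
    ∃ e : Basis (Fin 2) K V, ω (e 0) (e 1) = 1 := by
  obtain ⟨a, b, hab⟩ : ∃ a b, ω a b ≠ 0 := by
    by_contra! h
    exact hω0 (LinearMap.ext₂ h)
  have hab' : ω a ((ω a b)⁻¹ • b) = 1 := by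
    rw [map_smul, smul_eq_mul, inv_mul_cancel₀ hab]
  refine ⟨basisOfLinearIndependentOfCardEqFinrank
    (hω.linearIndependent_pair (hab' ▸ one_ne_zero)) (by simp [hV]), ?_⟩
  simpa [coe_basisOfLinearIndependentOfCardEqFinrank] using hab'

theorem eq_smul_sub_smul (hω : ω.IsAlt) (e : Basis (Fin 2) K V) (he : ω (e 0) (e 1) = 1)
    (w : V) : w = ω (e 0) w • e 1 - ω (e 1) w • e 0 := by
  have hw := (e.sum_repr w).symm
  rw [Fin.sum_univ_two] at hw
  have he' : ω (e 1) (e 0) = -1 := by rw [← hω.neg, he]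
  conv_rhs => rw [hw]
  simp only [map_add, map_smul, hω.self_eq_zero, he, he', smul_eq_mul]
  nth_rw 1 [hw]
  module

end LinearMap.IsAlt

namespace LinearMap

variable {K M N ι : Type*} [Field K] [AddCommGroup M] [Module K M] [AddCommGroup N] [Module K N]

theorem range_eq_span_comp_basis (f : M →ₗ[K] N) (e : Basis ι K M) :
    range f = Submodule.span K (Set.range (f ∘ e)) := by
  rw [range_eq_map, ← e.span_eq, Submodule.map_span, ← Set.range_comp]

theorem linearIndependent_comp_basis_iff [Fintype ι] (f : M →ₗ[K] N) (e : Basis ι K M) :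
    LinearIndependent K (f ∘ e) ↔ finrank K (range f) = Fintype.card ι := by
  rw [linearIndependent_iff_card_eq_finrank_span, Set.finrank, range_eq_span_comp_basis f e,
    eq_comm]

theorem bijective_iff_finrank_range_eq [FiniteDimensional K M] [FiniteDimensional K N]
    (h : finrank K M = finrank K N) (f : M →ₗ[K] N) :
    Function.Bijective f ↔ finrank K (range f) = finrank K N := by
  rw [Function.Bijective, injective_iff_surjective_of_finrank_eq_finrank h, and_self,
    ← range_eq_top, Submodule.eq_top_iff_finrank_eq]

end LinearMap

section TensorOfAlternating

variable {K E₁ E₂ : Type*} [Field K] [AddCommGroup E₁] [Module K E₁] [AddCommGroup E₂]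
  [Module K E₂] {ω₁ : E₁ →ₗ[K] E₁ →ₗ[K] K} {ω₂ : E₂ →ₗ[K] E₂ →ₗ[K] K}
  {Ψ : E₁ ⊗[K] E₂ →ₗ[K] (E₁ →ₗ[K] E₂)}

theorem eq_tmul_sub_tmul_of_basis_apply_eq_one (hω₁ : ω₁.IsAlt)
    (hΨ : ∀ (e₁ : E₁) (e₂ : E₂) (x : E₁), Ψ (e₁ ⊗ₜ[K] e₂) x = ω₁ x e₁ • e₂)
    (e : Basis (Fin 2) K E₁) (he : ω₁ (e 0) (e 1) = 1) (v : E₁ ⊗[K] E₂) :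
    v = e 1 ⊗ₜ Ψ v (e 0) - e 0 ⊗ₜ Ψ v (e 1) := by
  induction v using TensorProduct.induction_on with
  | zero => simp
  | tmul w z =>
    rw [hΨ, hΨ, tmul_smul, tmul_smul, smul_tmul', smul_tmul', ← sub_tmul,
      ← hω₁.eq_smul_sub_smul e he w]
  | add u w hu hw =>
    simp only [map_add, LinearMap.add_apply, tmul_add]
    conv_lhs => rw [hu, hw]
    abel

theorem injective_of_basis_apply_eq_one (hω₁ : ω₁.IsAlt)
    (hΨ : ∀ (e₁ : E₁) (e₂ : E₂) (x : E₁), Ψ (e₁ ⊗ₜ[K] e₂) x = ω₁ x e₁ • e₂)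
    (e : Basis (Fin 2) K E₁) (he : ω₁ (e 0) (e 1) = 1) : Function.Injective Ψ := by
  refine (injective_iff_map_eq_zero Ψ).mpr fun v hv => ?_
  rw [eq_tmul_sub_tmul_of_basis_apply_eq_one hω₁ hΨ e he v, hv]
  simp

theorem apply_self_eq_two_mul_of_basis_apply_eq_one (hω₁ : ω₁.IsAlt) (hω₂ : ω₂.IsAlt)
    {B : E₁ ⊗[K] E₂ →ₗ[K] E₁ ⊗[K] E₂ →ₗ[K] K}
    (hB : ∀ (e₁ f₁ : E₁) (e₂ f₂ : E₂), B (e₁ ⊗ₜ[K] e₂) (f₁ ⊗ₜ[K] f₂) = ω₁ e₁ f₁ * ω₂ e₂ f₂)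
    (hΨ : ∀ (e₁ : E₁) (e₂ : E₂) (x : E₁), Ψ (e₁ ⊗ₜ[K] e₂) x = ω₁ x e₁ • e₂)
    (e : Basis (Fin 2) K E₁) (he : ω₁ (e 0) (e 1) = 1) (v : E₁ ⊗[K] E₂) :
    B v v = 2 * ω₂ (Ψ v (e 0)) (Ψ v (e 1)) := by
  have hv := eq_tmul_sub_tmul_of_basis_apply_eq_one hω₁ hΨ e he v
  set y := Ψ v (e 0)
  set x := Ψ v (e 1)
  have he' : ω₁ (e 1) (e 0) = -1 := by rw [← hω₁.neg, he]
  rw [hv]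
  simp only [map_sub, LinearMap.sub_apply, hB, hω₁.self_eq_zero, hω₂.self_eq_zero, he, he',
    ← hω₂.neg x y]
  ring

end TensorOfAlternating

/-- The map `Ψ : E₁ ⊗ E₂ → Hom(E₁, E₂)`, `Ψ(e₁ ⊗ e₂)(x) = ω₁(x, e₁) • e₂`, is a linear
isomorphism; moreover `B(v,v) = 0` iff `Ψ(v)` has rank at most one, and `B(v,v) ≠ 0` iff
`Ψ(v)` is bijective. -/
theorem stmt_2 (K : Type*) [Field K] (hK2 : (2 : K) ≠ 0)
    (E₁ E₂ : Type*) [AddCommGroup E₁] [Module K E₁] [AddCommGroup E₂] [Module K E₂]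
    [FiniteDimensional K E₁] [FiniteDimensional K E₂]
    (hE₁ : Module.finrank K E₁ = 2) (hE₂ : Module.finrank K E₂ = 2)
    (ω₁ : E₁ →ₗ[K] E₁ →ₗ[K] K) (ω₂ : E₂ →ₗ[K] E₂ →ₗ[K] K)
    (hω₁alt : ∀ x, ω₁ x x = 0) (hω₂alt : ∀ y, ω₂ y y = 0)
    (hω₁ne : ω₁ ≠ 0) (hω₂ne : ω₂ ≠ 0)
    (B : E₁ ⊗[K] E₂ →ₗ[K] E₁ ⊗[K] E₂ →ₗ[K] K)
    (hB : ∀ (e₁ f₁ : E₁) (e₂ f₂ : E₂),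
      B (e₁ ⊗ₜ[K] e₂) (f₁ ⊗ₜ[K] f₂) = ω₁ e₁ f₁ * ω₂ e₂ f₂)
    (Ψ : E₁ ⊗[K] E₂ →ₗ[K] (E₁ →ₗ[K] E₂))
    (hΨ : ∀ (e₁ : E₁) (e₂ : E₂) (x : E₁), Ψ (e₁ ⊗ₜ[K] e₂) x = ω₁ x e₁ • e₂) :
    Function.Bijective Ψ ∧
    ∀ v : E₁ ⊗[K] E₂,
      (B v v = 0 ↔ Module.finrank K (LinearMap.range (Ψ v)) ≤ 1) ∧
      (B v v ≠ 0 ↔ Function.Bijective (Ψ v)) := by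
  obtain ⟨e, he⟩ := LinearMap.IsAlt.exists_basis_apply_eq_one hω₁alt hω₁ne hE₁
  have hΨinj := injective_of_basis_apply_eq_one hω₁alt hΨ e he
  refine ⟨⟨hΨinj, (LinearMap.injective_iff_surjective_of_finrank_eq_finrank (by
    rw [finrank_tensorProduct, finrank_linearMap, hE₁, hE₂])).mp hΨinj⟩, fun v => ?_⟩
  have hpair : Ψ v ∘ e = ![Ψ v (e 0), Ψ v (e 1)] := by
    ext i; fin_cases i <;> rfl
  have hne : B v v ≠ 0 ↔ finrank K (LinearMap.range (Ψ v)) = 2 := by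
    rw [apply_self_eq_two_mul_of_basis_apply_eq_one hω₁alt hω₂alt hB hΨ e he, mul_ne_zero_iff,
      LinearMap.IsAlt.apply_ne_zero_iff_linearIndependent_pair hω₂alt hω₂ne hE₂, ← hpair,
      LinearMap.linearIndependent_comp_basis_iff, Fintype.card_fin]
    exact and_iff_right hK2
  have hle : finrank K (LinearMap.range (Ψ v)) ≤ 2 := hE₂ ▸ Submodule.finrank_le _
  rw [LinearMap.bijective_iff_finrank_range_eq (hE₁.trans hE₂.symm), hE₂, ← hne]
  exact ⟨by rw [← not_ne_iff, hne]; omega, Iff.rfl⟩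
end

section
/- A 2-dimensional subspace U ⊆ E₁ ⊗ E₂ satisfies B(u, u') = 0 for all u, u' ∈ U if and only if either there is a 1-dimensional subspace Λ₁ ⊆ E₁ with U = span{e ⊗ f : e ∈ Λ₁, f ∈ E₂}, or there is a 1-dimensional subspace Λ₂ ⊆ E₂ with U = span{e ⊗ f : e ∈ E₁, f ∈ Λ₂}. -/
/-!
An isotropic vector `u` of `B` is a pure tensor: writing `u = p ⊗ c₀ + q ⊗ c₁` in a basis of
`E₂` gives `B u u = 2 ω₁(p, q) ω₂(c₀, c₁)`, and in dimension two `ω₁(p, q) = 0` forces `p`, `q` to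
be proportional. A totally isotropic plane is therefore spanned by pure tensors `x₀ ⊗ y₀` and
`x₁ ⊗ y₁` with `ω₁(x₀, x₁) ω₂(y₀, y₁) = 0`, so the `xᵢ` (or the `yᵢ`) lie on a common line `Λ`,
and the plane is contained in, hence by dimension equal to, `Λ ⊗ E₂` (or `E₁ ⊗ Λ`). Conversely
an alternating form vanishes on a line, so `Λ ⊗ E₂` and `E₁ ⊗ Λ` are totally isotropic.
-/

open TensorProduct Module

namespace LinearMap.IsAlt

variable {K E : Type*} [Field K] [AddCommGroup E] [Module K E] {ω : E →ₗ[K] E →ₗ[K] K}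

lemma apply_eq_zero_of_finrank_eq_one (hω : ω.IsAlt) {Λ : Submodule K E}
    (hΛ : finrank K Λ = 1) {x y : E} (hx : x ∈ Λ) (hy : y ∈ Λ) : ω x y = 0 := by
  obtain ⟨v, -, hv⟩ := finrank_eq_one_iff'.mp hΛ
  obtain ⟨a, ha⟩ := hv ⟨x, hx⟩
  obtain ⟨b, hb⟩ := hv ⟨y, hy⟩
  obtain rfl : a • (v : E) = x := congrArg Subtype.val ha
  obtain rfl : b • (v : E) = y := congrArg Subtype.val hb
  simp [hω.self_eq_zero]

lemma mem_span_singleton_of_apply_eq_zero (hω : ω.IsAlt) (hne : ω ≠ 0)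
    (hE : finrank K E = 2) {x y : E} (hx : x ≠ 0) (h : ω x y = 0) : y ∈ K ∙ x := by
  by_contra hy
  have hli : LinearIndependent K ![y, x] := linearIndependent_fin2.2
    ⟨by simpa using hx, fun a ha => hy (Submodule.mem_span_singleton.2 ⟨a, by simpa using ha⟩)⟩
  let b := basisOfLinearIndependentOfCardEqFinrank hli (by simp [hE])
  have hb : ⇑b = ![y, x] := coe_basisOfLinearIndependentOfCardEqFinrank hli _
  refine hne (LinearMap.ext_basis b b fun i j => ?_)
  fin_cases i <;> fin_cases j <;> simp [hb, hω.self_eq_zero, h, ← hω.neg x y]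

end LinearMap.IsAlt

lemma LinearMap.apply_eq_zero_of_mem_span {R M N P : Type*} [CommSemiring R]
    [AddCommMonoid M] [Module R M] [AddCommMonoid N] [Module R N] [AddCommMonoid P] [Module R P]
    (B : M →ₗ[R] N →ₗ[R] P) {s : Set M} {t : Set N} (h : ∀ x ∈ s, ∀ y ∈ t, B x y = 0)
    {x : M} {y : N} (hx : x ∈ Submodule.span R s) (hy : y ∈ Submodule.span R t) : B x y = 0 := by
  induction hx, hy using Submodule.span_induction₂ <;> simp_all

namespace TensorProduct

variable {K M N : Type*} [Field K] [AddCommGroup M] [Module K M] [AddCommGroup N] [Module K N]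

lemma span_tmul_mem_left_eq_range (Λ : Submodule K M) :
    Submodule.span K {x : M ⊗[K] N | ∃ e ∈ Λ, ∃ f : N, x = e ⊗ₜ f} =
      LinearMap.range (map Λ.subtype (LinearMap.id : N →ₗ[K] N)) := by
  rw [range_map_eq_span_tmul]
  congr 1
  ext x
  simp [eq_comm]

lemma span_tmul_mem_right_eq_range (Λ : Submodule K N) :
    Submodule.span K {x : M ⊗[K] N | ∃ e : M, ∃ f ∈ Λ, x = e ⊗ₜ f} =
      LinearMap.range (map (LinearMap.id : M →ₗ[K] M) Λ.subtype) := by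
  rw [range_map_eq_span_tmul]
  congr 1
  ext x
  simp [eq_comm]

variable [FiniteDimensional K M] [FiniteDimensional K N]

lemma finrank_span_tmul_mem_left_le (Λ : Submodule K M) :
    finrank K (Submodule.span K {x : M ⊗[K] N | ∃ e ∈ Λ, ∃ f : N, x = e ⊗ₜ f}) ≤
      finrank K Λ * finrank K N := by
  rw [span_tmul_mem_left_eq_range, ← finrank_tensorProduct]
  exact LinearMap.finrank_range_le _

lemma finrank_span_tmul_mem_right_le (Λ : Submodule K N) :
    finrank K (Submodule.span K {x : M ⊗[K] N | ∃ e : M, ∃ f ∈ Λ, x = e ⊗ₜ f}) ≤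
      finrank K M * finrank K Λ := by
  rw [span_tmul_mem_right_eq_range, ← finrank_tensorProduct]
  exact LinearMap.finrank_range_le _

lemma eq_span_tmul_mem_left_of_le {U : Submodule K (M ⊗[K] N)} (hU : finrank K U = finrank K N)
    {Λ : Submodule K M} (hΛ : finrank K Λ = 1)
    (hle : U ≤ Submodule.span K {x : M ⊗[K] N | ∃ e ∈ Λ, ∃ f : N, x = e ⊗ₜ f}) :
    U = Submodule.span K {x : M ⊗[K] N | ∃ e ∈ Λ, ∃ f : N, x = e ⊗ₜ f} :=
  Submodule.eq_of_le_of_finrank_le hle <| by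
    simpa [hΛ, hU] using finrank_span_tmul_mem_left_le (N := N) Λ

lemma eq_span_tmul_mem_right_of_le {U : Submodule K (M ⊗[K] N)} (hU : finrank K U = finrank K M)
    {Λ : Submodule K N} (hΛ : finrank K Λ = 1)
    (hle : U ≤ Submodule.span K {x : M ⊗[K] N | ∃ e : M, ∃ f ∈ Λ, x = e ⊗ₜ f}) :
    U = Submodule.span K {x : M ⊗[K] N | ∃ e : M, ∃ f ∈ Λ, x = e ⊗ₜ f} :=
  Submodule.eq_of_le_of_finrank_le hle <| by
    simpa [hΛ, hU] using finrank_span_tmul_mem_right_le (M := M) Λ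

end TensorProduct

lemma TensorProduct.exists_eq_tmul_add_tmul {R M N : Type*} [CommSemiring R]
    [AddCommMonoid M] [Module R M] [AddCommMonoid N] [Module R N] (c : Basis (Fin 2) R N)
    (u : M ⊗[R] N) : ∃ p q : M, u = p ⊗ₜ c 0 + q ⊗ₜ c 1 := by
  classical
  refine ⟨equivFinsuppOfBasisRight c u 0, equivFinsuppOfBasisRight c u 1, ?_⟩
  conv_lhs => rw [← (equivFinsuppOfBasisRight c).symm_apply_apply u]
  rw [equivFinsuppOfBasisRight_symm_apply, Finsupp.sum_fintype _ _ (by simp), Fin.sum_univ_two]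

section IsotropicPlane

variable {K E₁ E₂ : Type*} [Field K] [AddCommGroup E₁] [Module K E₁] [AddCommGroup E₂]
  [Module K E₂] {ω₁ : E₁ →ₗ[K] E₁ →ₗ[K] K} {ω₂ : E₂ →ₗ[K] E₂ →ₗ[K] K}
  {B : E₁ ⊗[K] E₂ →ₗ[K] E₁ ⊗[K] E₂ →ₗ[K] K}

lemma exists_eq_tmul_of_apply_self_eq_zero (hK2 : (2 : K) ≠ 0)
    (hE₁ : finrank K E₁ = 2) (hE₂ : finrank K E₂ = 2) (hω₁ : ω₁.IsAlt) (hω₂ : ω₂.IsAlt)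
    (hω₁ne : ω₁ ≠ 0) (hω₂ne : ω₂ ≠ 0)
    (hB : ∀ e₁ f₁ e₂ f₂, B (e₁ ⊗ₜ[K] e₂) (f₁ ⊗ₜ[K] f₂) = ω₁ e₁ f₁ * ω₂ e₂ f₂)
    {u : E₁ ⊗[K] E₂} (hu : B u u = 0) : ∃ x y, u = x ⊗ₜ[K] y := by
  have : FiniteDimensional K E₂ := .of_finrank_pos (by omega)
  let c := finBasisOfFinrankEq K E₂ hE₂
  obtain ⟨p, q, rfl⟩ := exists_eq_tmul_add_tmul c u
  have hc : ω₂ (c 0) (c 1) ≠ 0 := by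
    have := c.linearIndependent.notMem_span_image (s := {0}) (x := 1) (by simp)
    rw [Set.image_singleton] at this
    exact fun h => this (hω₂.mem_span_singleton_of_apply_eq_zero hω₂ne hE₂ (c.ne_zero 0) h)
  have hBuu : B (p ⊗ₜ c 0 + q ⊗ₜ c 1) (p ⊗ₜ c 0 + q ⊗ₜ c 1) =
      2 * ω₁ p q * ω₂ (c 0) (c 1) := by
    simp only [map_add, LinearMap.add_apply, hB, hω₁.self_eq_zero, hω₂.self_eq_zero,
      ← hω₁.neg p q, ← hω₂.neg (c 0) (c 1)]
    ring
  have hpq : ω₁ p q = 0 := by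
    rw [hBuu] at hu
    simpa [hK2, hc] using hu
  by_cases hp : p = 0
  · exact ⟨q, c 1, by simp [hp]⟩
  · obtain ⟨a, rfl⟩ := Submodule.mem_span_singleton.mp
      (hω₁.mem_span_singleton_of_apply_eq_zero hω₁ne hE₁ hp hpq)
    exact ⟨p, c 0 + a • c 1, by rw [tmul_add, tmul_smul, smul_tmul']⟩

lemma isotropic_span_tmul_mem_left
    (hω₁ : ω₁.IsAlt) (hB : ∀ e₁ f₁ e₂ f₂, B (e₁ ⊗ₜ[K] e₂) (f₁ ⊗ₜ[K] f₂) = ω₁ e₁ f₁ * ω₂ e₂ f₂)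
    {Λ : Submodule K E₁} (hΛ : finrank K Λ = 1) :
    ∀ u ∈ Submodule.span K {x : E₁ ⊗[K] E₂ | ∃ e ∈ Λ, ∃ f : E₂, x = e ⊗ₜ[K] f},
      ∀ u' ∈ Submodule.span K {x : E₁ ⊗[K] E₂ | ∃ e ∈ Λ, ∃ f : E₂, x = e ⊗ₜ[K] f}, B u u' = 0 := by
  intro u hu u' hu'
  refine B.apply_eq_zero_of_mem_span ?_ hu hu'
  rintro _ ⟨e, he, f, rfl⟩ _ ⟨e', he', f', rfl⟩
  rw [hB, hω₁.apply_eq_zero_of_finrank_eq_one hΛ he he', zero_mul]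

lemma isotropic_span_tmul_mem_right
    (hω₂ : ω₂.IsAlt) (hB : ∀ e₁ f₁ e₂ f₂, B (e₁ ⊗ₜ[K] e₂) (f₁ ⊗ₜ[K] f₂) = ω₁ e₁ f₁ * ω₂ e₂ f₂)
    {Λ : Submodule K E₂} (hΛ : finrank K Λ = 1) :
    ∀ u ∈ Submodule.span K {x : E₁ ⊗[K] E₂ | ∃ e : E₁, ∃ f ∈ Λ, x = e ⊗ₜ[K] f},
      ∀ u' ∈ Submodule.span K {x : E₁ ⊗[K] E₂ | ∃ e : E₁, ∃ f ∈ Λ, x = e ⊗ₜ[K] f}, B u u' = 0 := by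
  intro u hu u' hu'
  refine B.apply_eq_zero_of_mem_span ?_ hu hu'
  rintro _ ⟨e, f, hf, rfl⟩ _ ⟨e', f', hf', rfl⟩
  rw [hB, hω₂.apply_eq_zero_of_finrank_eq_one hΛ hf hf', mul_zero]

lemma eq_span_tmul_of_isotropic [FiniteDimensional K E₁] [FiniteDimensional K E₂]
    (hK2 : (2 : K) ≠ 0) (hE₁ : finrank K E₁ = 2) (hE₂ : finrank K E₂ = 2)
    (hω₁ : ω₁.IsAlt) (hω₂ : ω₂.IsAlt) (hω₁ne : ω₁ ≠ 0) (hω₂ne : ω₂ ≠ 0)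
    (hB : ∀ e₁ f₁ e₂ f₂, B (e₁ ⊗ₜ[K] e₂) (f₁ ⊗ₜ[K] f₂) = ω₁ e₁ f₁ * ω₂ e₂ f₂)
    {U : Submodule K (E₁ ⊗[K] E₂)} (hU : finrank K U = 2)
    (hiso : ∀ u ∈ U, ∀ u' ∈ U, B u u' = 0) :
    (∃ Λ₁ : Submodule K E₁, finrank K Λ₁ = 1 ∧
        U = Submodule.span K {x : E₁ ⊗[K] E₂ | ∃ e ∈ Λ₁, ∃ f : E₂, x = e ⊗ₜ[K] f}) ∨
      (∃ Λ₂ : Submodule K E₂, finrank K Λ₂ = 1 ∧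
        U = Submodule.span K {x : E₁ ⊗[K] E₂ | ∃ e : E₁, ∃ f ∈ Λ₂, x = e ⊗ₜ[K] f}) := by
  let v := finBasisOfFinrankEq K U hU
  choose x y hxy using fun i => exists_eq_tmul_of_apply_self_eq_zero hK2 hE₁ hE₂ hω₁ hω₂
    hω₁ne hω₂ne hB (hiso _ (v i).2 _ (v i).2)
  have hv0 : x 0 ⊗ₜ[K] y 0 ≠ 0 := hxy 0 ▸ (Submodule.coe_eq_zero.not.mpr (v.ne_zero 0))
  have hx0 : x 0 ≠ 0 := by rintro h; simp [h] at hv0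
  have hy0 : y 0 ≠ 0 := by rintro h; simp [h] at hv0
  have hU_le : ∀ S : Submodule K (E₁ ⊗[K] E₂), (∀ i, x i ⊗ₜ[K] y i ∈ S) → U ≤ S := by
    intro S hS u hu
    rw [← Submodule.coe_mk u hu, ← v.sum_repr ⟨u, hu⟩]
    simp only [Submodule.coe_sum, Submodule.coe_smul, hxy]
    exact S.sum_mem fun i _ => S.smul_mem _ (hS i)
  have h01 : ω₁ (x 0) (x 1) * ω₂ (y 0) (y 1) = 0 := by
    rw [← hB, ← hxy, ← hxy]
    exact hiso _ (v 0).2 _ (v 1).2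
  rcases mul_eq_zero.mp h01 with h | h
  · refine .inl ⟨K ∙ x 0, finrank_span_singleton hx0, eq_span_tmul_mem_left_of_le
      (hU.trans hE₂.symm) (finrank_span_singleton hx0)
      (hU_le _ fun i => Submodule.subset_span ⟨x i, ?_, y i, rfl⟩)⟩
    fin_cases i
    exacts [Submodule.mem_span_singleton_self _,
      hω₁.mem_span_singleton_of_apply_eq_zero hω₁ne hE₁ hx0 h]
  · refine .inr ⟨K ∙ y 0, finrank_span_singleton hy0, eq_span_tmul_mem_right_of_le
      (hU.trans hE₁.symm) (finrank_span_singleton hy0)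
      (hU_le _ fun i => Submodule.subset_span ⟨x i, y i, ?_, rfl⟩)⟩
    fin_cases i
    exacts [Submodule.mem_span_singleton_self _,
      hω₂.mem_span_singleton_of_apply_eq_zero hω₂ne hE₂ hy0 h]

end IsotropicPlane

/-- A two-dimensional subspace `U ⊆ E₁ ⊗ E₂` is totally isotropic for `B` iff it is of the form
`Λ₁ ⊗ E₂` for a line `Λ₁ ⊆ E₁` or `E₁ ⊗ Λ₂` for a line `Λ₂ ⊆ E₂`. -/
theorem stmt_3 (K : Type*) [Field K] (hK2 : (2 : K) ≠ 0)
    (E₁ E₂ : Type*) [AddCommGroup E₁] [Module K E₁] [AddCommGroup E₂] [Module K E₂]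
    [FiniteDimensional K E₁] [FiniteDimensional K E₂]
    (hE₁ : Module.finrank K E₁ = 2) (hE₂ : Module.finrank K E₂ = 2)
    (ω₁ : E₁ →ₗ[K] E₁ →ₗ[K] K) (ω₂ : E₂ →ₗ[K] E₂ →ₗ[K] K)
    (hω₁alt : ∀ x, ω₁ x x = 0) (hω₂alt : ∀ y, ω₂ y y = 0)
    (hω₁ne : ω₁ ≠ 0) (hω₂ne : ω₂ ≠ 0)
    (B : E₁ ⊗[K] E₂ →ₗ[K] E₁ ⊗[K] E₂ →ₗ[K] K)
    (hB : ∀ (e₁ f₁ : E₁) (e₂ f₂ : E₂),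
      B (e₁ ⊗ₜ[K] e₂) (f₁ ⊗ₜ[K] f₂) = ω₁ e₁ f₁ * ω₂ e₂ f₂)
    (U : Submodule K (E₁ ⊗[K] E₂)) (hU : Module.finrank K U = 2) :
    (∀ u ∈ U, ∀ u' ∈ U, B u u' = 0) ↔
      ((∃ Λ₁ : Submodule K E₁, Module.finrank K Λ₁ = 1 ∧
          U = Submodule.span K {x : E₁ ⊗[K] E₂ | ∃ e ∈ Λ₁, ∃ f : E₂, x = e ⊗ₜ[K] f}) ∨
       (∃ Λ₂ : Submodule K E₂, Module.finrank K Λ₂ = 1 ∧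
          U = Submodule.span K {x : E₁ ⊗[K] E₂ | ∃ e : E₁, ∃ f ∈ Λ₂, x = e ⊗ₜ[K] f})) := by
  refine ⟨eq_span_tmul_of_isotropic hK2 hE₁ hE₂ hω₁alt hω₂alt hω₁ne hω₂ne hB hU, ?_⟩
  rintro (⟨Λ₁, hΛ₁, rfl⟩ | ⟨Λ₂, hΛ₂, rfl⟩)
  exacts [isotropic_span_tmul_mem_left hω₁alt hB hΛ₁,
    isotropic_span_tmul_mem_right hω₂alt hB hΛ₂]
end

section
/- Assume in addition that K is algebraically closed. For every symmetric tensor x ∈ E ⊗ E (i.e., τ(x) = x), one has B(x, x) = 0 if and only if x = e ⊗ e for some e ∈ E. -/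
/-!
Choose `u, v` with `ω u v = 1`; they form a basis of `E`. A symmetric tensor is then
`x = a u⊗u + b (u⊗v + v⊗u) + d v⊗v`, and `B(x, x) = 2 (a d - b²)` is, up to the factor `2`,
the determinant of the symmetric matrix of `x`. So `B(x, x) = 0` iff `a d = b²`, and over an
algebraically closed field this means `a = s²`, `b = s t`, `d = t²`, i.e. `x = e ⊗ e` with
`e = s u + t v`.
-/

open TensorProduct

section Field

variable {K E : Type*} [Field K] [AddCommGroup E] [Module K E]

theorem LinearMap.exists_apply_apply_eq_one {F : Type*} [AddCommGroup F] [Module K F]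
    {ω : E →ₗ[K] F →ₗ[K] K} (hω : ω ≠ 0) : ∃ u v, ω u v = 1 := by
  obtain ⟨p, q, hpq⟩ : ∃ p q, ω p q ≠ 0 := by
    by_contra! h
    exact hω (LinearMap.ext₂ h)
  exact ⟨p, (ω p q)⁻¹ • q, by rw [map_smul, smul_eq_mul, inv_mul_cancel₀ hpq]⟩

theorem LinearMap.IsAlt.linearIndependent_pair_s4 {ω : LinearMap.BilinForm K E} (hω : ω.IsAlt)
    {u v : E} (huv : ω u v = 1) : LinearIndependent K ![u, v] := by
  have hvu : ω v u = -1 := by rw [← LinearMap.IsAlt.neg hω u v, huv]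
  refine LinearIndependent.pair_iff.2 fun s t hst => ⟨?_, ?_⟩
  · simpa [hω v, hvu, huv] using congr(ω $hst v)
  · simpa [hω u, hvu, huv] using congr(ω u $hst)

theorem exists_smul_add_smul_eq_of_finrank_eq_two (hE : Module.finrank K E = 2) {u v : E}
    (huv : LinearIndependent K ![u, v]) (w : E) : ∃ s t : K, s • u + t • v = w := by
  have hspan := huv.span_eq_top_of_card_eq_finrank (by simp [hE])
  rw [Matrix.range_cons_cons_empty] at hspan
  exact Submodule.mem_span_pair.1 (hspan ▸ Submodule.mem_top)

theorem IsAlgClosed.exists_mul_self_eq_of_mul_eq [IsAlgClosed K] {a b d : K}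
    (h : a * d = b * b) : ∃ s t : K, s * s = a ∧ s * t = b ∧ t * t = d := by
  obtain ⟨s, hs⟩ := IsAlgClosed.exists_pow_nat_eq a two_pos
  rcases eq_or_ne s 0 with rfl | hs0
  · obtain ⟨t, ht⟩ := IsAlgClosed.exists_pow_nat_eq d two_pos
    have hb : b = 0 := mul_self_eq_zero.1 (by rw [← h, ← hs]; ring)
    exact ⟨0, t, by rw [← hs]; ring, by rw [hb, zero_mul], by rw [← ht, sq]⟩
  · refine ⟨s, b / s, by rw [← hs, sq], by field_simp, ?_⟩
    calc b / s * (b / s) = a * d / (s * s) := by rw [h]; ring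
      _ = d := by rw [← hs]; field_simp

end Field

section CommRing

variable {R M : Type*} [CommRing R] [AddCommGroup M] [Module R M]

theorem TensorProduct.smul_add_smul_tmul_self (u v : M) (s t : R) :
    (s • u + t • v) ⊗ₜ[R] (s • u + t • v) =
      (s * s) • u ⊗ₜ[R] u + (s * t) • (u ⊗ₜ[R] v + v ⊗ₜ[R] u) + (t * t) • v ⊗ₜ[R] v := by
  simp only [add_tmul, tmul_add, ← smul_tmul', tmul_smul]
  module

theorem TensorProduct.exists_eq_of_forall_exists_smul_add_smul_eq {u v : M}
    (hspan : ∀ w : M, ∃ s t : R, s • u + t • v = w) (x : M ⊗[R] M) :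
    ∃ a b c d : R, x = a • u ⊗ₜ u + b • u ⊗ₜ v + c • v ⊗ₜ u + d • v ⊗ₜ v := by
  induction x with
  | zero => exact ⟨0, 0, 0, 0, by simp⟩
  | tmul w z =>
    obtain ⟨s, t, rfl⟩ := hspan w
    obtain ⟨s', t', rfl⟩ := hspan z
    refine ⟨s * s', s * t', t * s', t * t', ?_⟩
    simp only [add_tmul, tmul_add, ← smul_tmul', tmul_smul]
    module
  | add y z hy hz =>
    obtain ⟨a, b, c, d, rfl⟩ := hy
    obtain ⟨a', b', c', d', rfl⟩ := hz
    exact ⟨a + a', b + b', c + c', d + d', by module⟩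

theorem TensorProduct.exists_eq_of_comm_apply_eq_self [Invertible (2 : R)] {u v : M}
    (hspan : ∀ w : M, ∃ s t : R, s • u + t • v = w) {x : M ⊗[R] M}
    (hx : TensorProduct.comm R M M x = x) :
    ∃ a b d : R, x = a • u ⊗ₜ u + b • (u ⊗ₜ v + v ⊗ₜ u) + d • v ⊗ₜ v := by
  obtain ⟨a, b, c, d, hx'⟩ := exists_eq_of_forall_exists_smul_add_smul_eq hspan x
  refine ⟨a, ⅟2 * (b + c), d, ?_⟩
  have hsymm : x = (⅟2 : R) • (x + TensorProduct.comm R M M x) := by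
    rw [hx, ← two_smul R x, smul_smul, invOf_mul_self, one_smul]
  rw [hsymm, hx']
  simp only [map_add, map_smul, comm_tmul]
  linear_combination (norm := module)
    (invOf_mul_self (2 : R)) • (a • u ⊗ₜ[R] u + d • v ⊗ₜ[R] v)

theorem LinearMap.IsAlt.tmul_self_apply_of_apply_eq_one {ω : LinearMap.BilinForm R M}
    (hω : ω.IsAlt) {u v : M} (huv : ω u v = 1) (a b d : R) :
    ω.tmul ω (a • u ⊗ₜ u + b • (u ⊗ₜ v + v ⊗ₜ u) + d • v ⊗ₜ v)
      (a • u ⊗ₜ u + b • (u ⊗ₜ v + v ⊗ₜ u) + d • v ⊗ₜ v) = 2 * (a * d - b * b) := by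
  have hvu : ω v u = -1 := by rw [← LinearMap.IsAlt.neg hω u v, huv]
  simp only [smul_add, map_add, map_smul, add_apply, smul_apply, BilinForm.tensorDistrib_tmul,
    smul_eq_mul, hω u, hω v, huv, hvu, mul_zero, mul_one, add_zero, zero_add, mul_neg, neg_zero,
    neg_neg]
  ring

end CommRing

theorem stmt_4_general (K : Type*) [Field K] [IsAlgClosed K] (hK2 : (2 : K) ≠ 0)
    (E : Type*) [AddCommGroup E] [Module K E]
    (hE : Module.finrank K E = 2)
    (ω : E →ₗ[K] E →ₗ[K] K) (hωalt : ∀ x, ω x x = 0) (hωne : ω ≠ 0)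
    (B : E ⊗[K] E →ₗ[K] E ⊗[K] E →ₗ[K] K)
    (hB : ∀ (e₁ f₁ e₂ f₂ : E),
      B (e₁ ⊗ₜ[K] e₂) (f₁ ⊗ₜ[K] f₂) = ω e₁ f₁ * ω e₂ f₂)
    (τ : E ⊗[K] E →ₗ[K] E ⊗[K] E)
    (hτ : ∀ x y : E, τ (x ⊗ₜ[K] y) = y ⊗ₜ[K] x) :
    ∀ x : E ⊗[K] E, τ x = x → (B x x = 0 ↔ ∃ e : E, x = e ⊗ₜ[K] e) := by
  obtain rfl : τ = TensorProduct.comm K E E := TensorProduct.ext' hτ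
  obtain rfl : B = LinearMap.BilinForm.tmul ω ω :=
    TensorProduct.ext' fun e₁ e₂ => TensorProduct.ext' fun f₁ f₂ => by simp [hB, mul_comm]
  obtain ⟨u, v, huv⟩ := ω.exists_apply_apply_eq_one hωne
  have hspan := exists_smul_add_smul_eq_of_finrank_eq_two hE
    (LinearMap.IsAlt.linearIndependent_pair_s4 hωalt huv)
  have := invertibleOfNonzero hK2
  intro x hx
  refine ⟨fun hiso => ?_, fun ⟨e, he⟩ => by simp [he, hωalt]⟩
  obtain ⟨a, b, d, rfl⟩ := exists_eq_of_comm_apply_eq_self hspan hx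
  rw [LinearMap.IsAlt.tmul_self_apply_of_apply_eq_one hωalt huv, mul_eq_zero,
    sub_eq_zero] at hiso
  obtain ⟨s, t, rfl, rfl, rfl⟩ :=
    IsAlgClosed.exists_mul_self_eq_of_mul_eq (hiso.resolve_left hK2)
  exact ⟨s • u + t • v, (smul_add_smul_tmul_self u v s t).symm⟩

/-- Over an algebraically closed field of characteristic `≠ 2`: for the form `B` on `E ⊗ E`
induced by a nonzero alternating form `ω` on a two-dimensional space `E`, a symmetric tensor `x`
(i.e. `τ x = x` for the flip `τ`) satisfies `B(x,x) = 0` iff `x = e ⊗ e` for some `e ∈ E`. -/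
theorem stmt_4 (K : Type*) [Field K] [IsAlgClosed K] (hK2 : (2 : K) ≠ 0)
    (E : Type*) [AddCommGroup E] [Module K E] [FiniteDimensional K E]
    (hE : Module.finrank K E = 2)
    (ω : E →ₗ[K] E →ₗ[K] K) (hωalt : ∀ x, ω x x = 0) (hωne : ω ≠ 0)
    (B : E ⊗[K] E →ₗ[K] E ⊗[K] E →ₗ[K] K)
    (hB : ∀ (e₁ f₁ e₂ f₂ : E),
      B (e₁ ⊗ₜ[K] e₂) (f₁ ⊗ₜ[K] f₂) = ω e₁ f₁ * ω e₂ f₂)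
    (τ : E ⊗[K] E →ₗ[K] E ⊗[K] E)
    (hτ : ∀ x y : E, τ (x ⊗ₜ[K] y) = y ⊗ₜ[K] x) :
    ∀ x : E ⊗[K] E, τ x = x → (B x x = 0 ↔ ∃ e : E, x = e ⊗ₜ[K] e) :=
  stmt_4_general K hK2 E hE ω hωalt hωne B hB τ hτ
end

section
/- For every ω ∈ ⋀²W: one has ω ∈ S and B(ω, ω) = 0 if and only if ω = v ∧ w for some v, w ∈ W with α(v, w) = 0. (Fiberwise, the isotropic locus of the rank-five orthogonal space S is the Lagrangian Grassmannian of α.) -/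
/-!
Write `ω = ∑ᵢⱼ cᵢⱼ eᵢ ∧ eⱼ` in a basis `e` of `W` and let `A = c - cᵀ`. Then
`ω ∧ ω = 2 pf(A) e₀ ∧ e₁ ∧ e₂ ∧ e₃`; since `⋀⁴W` is a line, `θ` is injective on it, so
`B(ω, ω) = 0` iff `pf(A) = 0`. When `pf(A) = 0`, the vectors `uᵢ = ∑ₖ Aᵢₖ eₖ` (the contractions
of `ω` with the dual basis) satisfy `uᵢ ∧ uⱼ = Aᵢⱼ ω`, so `ω` is decomposable as soon as some
`Aᵢⱼ ≠ 0`. Finally, for `ω = v ∧ w` the condition `ω ∈ ker α̃` reads `α(v, w) = 0`.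
-/

open scoped Matrix

def Matrix.pfaffianFour {R : Type*} [CommRing R] (A : Matrix (Fin 4) (Fin 4) R) : R :=
  A 0 1 * A 2 3 - A 0 2 * A 1 3 + A 0 3 * A 1 2

namespace ExteriorAlgebra

section CommRing

variable {R M : Type*} [CommRing R] [AddCommGroup M] [Module R M]

theorem ι_mul_ι_swap (v w : M) : ι R w * ι R v = -(ι R v * ι R w) :=
  eq_neg_of_add_eq_zero_left (ι_add_mul_swap w v)

theorem ι_mul_ι_mul_swap (v w : M) (x : ExteriorAlgebra R M) :
    ι R w * (ι R v * x) = -(ι R v * (ι R w * x)) := by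
  rw [← mul_assoc, ι_mul_ι_swap, neg_mul, mul_assoc]

theorem ι_mul_ι_mul_eq_zero (v : M) (x : ExteriorAlgebra R M) : ι R v * (ι R v * x) = 0 := by
  rw [← mul_assoc, ι_sq_zero, zero_mul]

theorem ι_mul_ι_mul_self_eq_zero (v w : M) : ι R v * ι R w * (ι R v * ι R w) = 0 := by
  rw [mul_assoc, ι_mul_ι_mul_swap, ι_mul_ι_mul_eq_zero, mul_zero, neg_zero]

theorem ιMulti_basis_ne_zero [Nontrivial R] {n : ℕ} (b : Module.Basis (Fin n) R M) :
    ιMulti R n b ≠ 0 := by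
  intro h
  have hb : exteriorPower.ιMulti R n b = 0 := Subtype.ext h
  have hdet := exteriorPower.alternatingMapLinearEquiv_apply_ιMulti b.det b
  rw [hb, map_zero, b.det_self] at hdet
  exact zero_ne_one hdet

theorem exists_eq_sum_ι_mul_ι {I : Type*} [Fintype I] (b : Module.Basis I R M)
    {x : ExteriorAlgebra R M} (hx : x ∈ ⋀[R]^2 M) :
    ∃ c : Matrix I I R, x = ∑ i, ∑ j, c i j • (ι R (b i) * ι R (b j)) := by
  rw [← ιMulti_span_fixedDegree] at hx
  induction hx using Submodule.span_induction with
  | mem _ h =>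
    obtain ⟨v, rfl⟩ := h
    refine ⟨Matrix.of fun i j => b.repr (v 0) i * b.repr (v 1) j, ?_⟩
    have hv : ιMulti R 2 v = ι R (v 0) * ι R (v 1) := by
      rw [ιMulti_apply]
      simp [List.ofFn_succ]
    rw [hv]
    conv_lhs => rw [← b.sum_repr (v 0), ← b.sum_repr (v 1)]
    simp only [map_sum, map_smul, Finset.sum_mul, Finset.mul_sum, smul_mul_smul, Matrix.of_apply]
    exact Finset.sum_comm
  | zero => exact ⟨0, by simp⟩
  | add _ _ _ _ hx hy =>
    obtain ⟨c, rfl⟩ := hx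
    obtain ⟨d, rfl⟩ := hy
    exact ⟨c + d, by simp [add_smul, Finset.sum_add_distrib]⟩
  | smul r _ _ hx =>
    obtain ⟨c, rfl⟩ := hx
    exact ⟨r • c, by simp [Finset.smul_sum, smul_smul]⟩

variable (e : Fin 4 → M) (c : Matrix (Fin 4) (Fin 4) R)

theorem ιMulti_fin_four : ιMulti R 4 e = ι R (e 0) * (ι R (e 1) * (ι R (e 2) * ι R (e 3))) := by
  simp [ιMulti_apply, Matrix.vecTail]

theorem sum_ι_mul_ι_fin_four :
    ∑ i, ∑ j, c i j • (ι R (e i) * ι R (e j)) =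
      (c - cᵀ) 0 1 • (ι R (e 0) * ι R (e 1)) + (c - cᵀ) 0 2 • (ι R (e 0) * ι R (e 2)) +
      (c - cᵀ) 0 3 • (ι R (e 0) * ι R (e 3)) + (c - cᵀ) 1 2 • (ι R (e 1) * ι R (e 2)) +
      (c - cᵀ) 1 3 • (ι R (e 1) * ι R (e 3)) + (c - cᵀ) 2 3 • (ι R (e 2) * ι R (e 3)) := by
  have h i j := ι_mul_ι_swap (R := R) (e i) (e j)
  simp only [Fin.sum_univ_four, ι_sq_zero, smul_zero, add_zero, zero_add, h 0 1, h 0 2, h 0 3,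
    h 1 2, h 1 3, h 2 3, Matrix.sub_apply, Matrix.transpose_apply, sub_smul, smul_neg]
  abel

theorem sum_ι_mul_ι_mul_self :
    (∑ i, ∑ j, c i j • (ι R (e i) * ι R (e j))) * (∑ i, ∑ j, c i j • (ι R (e i) * ι R (e j))) =
      (2 * (c - cᵀ).pfaffianFour) • ιMulti R 4 e := by
  have h i j := ι_mul_ι_swap (R := R) (e i) (e j)
  have h' i j := ι_mul_ι_mul_swap (R := R) (e i) (e j)
  rw [sum_ι_mul_ι_fin_four, ιMulti_fin_four, Matrix.pfaffianFour]
  simp only [mul_add, add_mul, smul_mul_assoc, mul_smul_comm, mul_assoc, h 1 2, h 1 3, h 2 3,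
    h' 0 1, h' 0 2, h' 0 3, h' 1 2, h' 1 3, h' 2 3, ι_sq_zero, ι_mul_ι_mul_eq_zero, mul_zero,
    smul_zero, mul_neg, smul_neg, add_zero, zero_add]
  module

theorem ι_mul_ι_eq_smul_sum (hpf : (c - cᵀ).pfaffianFour = 0) (i j : Fin 4) :
    ι R (∑ k, (c - cᵀ) i k • e k) * ι R (∑ k, (c - cᵀ) j k • e k) =
      (c - cᵀ) i j • ∑ i, ∑ j, c i j • (ι R (e i) * ι R (e j)) := by
  have h i j := ι_mul_ι_swap (R := R) (e i) (e j)
  rw [sum_ι_mul_ι_fin_four]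
  set A := c - cᵀ
  have hskew i j : A j i = -A i j := by simp [A]
  have hdiag i : A i i = 0 := by simp [A]
  rw [Matrix.pfaffianFour] at hpf
  fin_cases i <;> fin_cases j <;>
  · simp only [Fin.sum_univ_four, map_add, map_smul, add_mul, mul_add, smul_mul_assoc,
      mul_smul_comm, smul_add, smul_smul, ι_sq_zero, smul_zero, add_zero, zero_add, h 0 1, h 0 2,
      h 0 3, h 1 2, h 1 3, h 2 3, hdiag, hskew 0 1, hskew 0 2, hskew 0 3, hskew 1 2, hskew 1 3,
      hskew 2 3, neg_smul, map_neg, mul_neg, neg_mul, smul_neg, zero_smul, zero_mul, Fin.zero_eta,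
      Fin.mk_one, Fin.reduceFinMk]
    match_scalars <;> first | ring1 | linear_combination hpf | linear_combination -hpf

end CommRing

variable {K W : Type*} [Field K] [AddCommGroup W] [Module K W] [FiniteDimensional K W]

theorem mul_self_eq_zero_iff_exists_eq_ι_mul_ι (hK : (2 : K) ≠ 0)
    (hW : Module.finrank K W = 4) {x : ExteriorAlgebra K W} (hx : x ∈ ⋀[K]^2 W) :
    x * x = 0 ↔ ∃ v w : W, x = ι K v * ι K w := by
  refine ⟨fun hxx => ?_, fun ⟨v, w, hvw⟩ => hvw ▸ ι_mul_ι_mul_self_eq_zero v w⟩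
  let b := Module.finBasisOfFinrankEq K W hW
  obtain ⟨c, rfl⟩ := exists_eq_sum_ι_mul_ι b hx
  have hpf : (c - cᵀ).pfaffianFour = 0 := by
    rw [sum_ι_mul_ι_mul_self, smul_eq_zero] at hxx
    exact (mul_eq_zero.1 (hxx.resolve_right (ιMulti_basis_ne_zero b))).resolve_left hK
  by_cases hA : c - cᵀ = 0
  · refine ⟨0, 0, ?_⟩
    rw [sum_ι_mul_ι_fin_four, hA]
    simp
  obtain ⟨i, j, hij⟩ : ∃ i j, (c - cᵀ) i j ≠ 0 := by
    by_contra! h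
    exact hA (Matrix.ext h)
  refine ⟨∑ k, (c - cᵀ) i k • b k, ((c - cᵀ) i j)⁻¹ • ∑ k, (c - cᵀ) j k • b k, ?_⟩
  rw [map_smul, mul_smul_comm, ι_mul_ι_eq_smul_sum b c hpf, smul_smul, inv_mul_cancel₀ hij,
    one_smul]

end ExteriorAlgebra

theorem stmt_9_general (K : Type*) [Field K] (hK2 : (2 : K) ≠ 0)
    (W : Type*) [AddCommGroup W] [Module K W] [FiniteDimensional K W]
    (hW : Module.finrank K W = 4)
    (wedge : ⋀[K]^2 W →ₗ[K] ⋀[K]^2 W →ₗ[K] ⋀[K]^4 W)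
    (hwedge : ∀ x y : ⋀[K]^2 W,
      (wedge x y : ExteriorAlgebra K W) = (x : ExteriorAlgebra K W) * (y : ExteriorAlgebra K W))
    (θ : ⋀[K]^4 W →ₗ[K] K) (hθ : θ ≠ 0)
    (B : ⋀[K]^2 W →ₗ[K] ⋀[K]^2 W →ₗ[K] K)
    (hB : ∀ x y : ⋀[K]^2 W, B x y = θ (wedge x y))
    (α : W →ₗ[K] W →ₗ[K] K)
    (αt : ⋀[K]^2 W →ₗ[K] K)
    (hαt : ∀ (x : ⋀[K]^2 W) (v w : W),
      (x : ExteriorAlgebra K W) = ExteriorAlgebra.ι K v * ExteriorAlgebra.ι K w →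
      αt x = α v w) :
    ∀ ω : ⋀[K]^2 W,
      (ω ∈ LinearMap.ker αt ∧ B ω ω = 0) ↔
      ∃ v w : W,
        (ω : ExteriorAlgebra K W) = ExteriorAlgebra.ι K v * ExteriorAlgebra.ι K w ∧
        α v w = 0 := by
  intro ω
  have : IsSimpleModule K (⋀[K]^4 W) :=
    isSimpleModule_iff_finrank_eq_one.mpr (by rw [exteriorPower.finrank_eq, hW]; rfl)
  have hBω : B ω ω = 0 ↔ (ω : ExteriorAlgebra K W) * ω = 0 := by
    rw [hB, map_eq_zero_iff θ (LinearMap.injective_of_ne_zero hθ), ← hwedge,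
      Submodule.coe_eq_zero]
  rw [LinearMap.mem_ker, hBω, ExteriorAlgebra.mul_self_eq_zero_iff_exists_eq_ι_mul_ι hK2 hW ω.2]
  constructor
  · rintro ⟨hα, v, w, hvw⟩
    exact ⟨v, w, hvw, (hαt ω v w hvw).symm.trans hα⟩
  · rintro ⟨v, w, hvw, hα⟩
    exact ⟨(hαt ω v w hvw).trans hα, v, w, hvw⟩

/-- For `ω ∈ ⋀²W`: `ω ∈ S = ker α̃` and `B(ω, ω) = 0` iff `ω = v ∧ w` for some `v, w ∈ W` with
`α(v, w) = 0`. Fiberwise, the isotropic locus of the rank-five orthogonal space `S` is the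
Lagrangian Grassmannian of `α`. -/
theorem stmt_9 (K : Type*) [Field K] (hK2 : (2 : K) ≠ 0)
    (W : Type*) [AddCommGroup W] [Module K W] [FiniteDimensional K W]
    (hW : Module.finrank K W = 4)
    (wedge : ⋀[K]^2 W →ₗ[K] ⋀[K]^2 W →ₗ[K] ⋀[K]^4 W)
    (hwedge : ∀ x y : ⋀[K]^2 W,
      (wedge x y : ExteriorAlgebra K W) = (x : ExteriorAlgebra K W) * (y : ExteriorAlgebra K W))
    (θ : ⋀[K]^4 W →ₗ[K] K) (hθ : θ ≠ 0)
    (B : ⋀[K]^2 W →ₗ[K] ⋀[K]^2 W →ₗ[K] K)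
    (hB : ∀ x y : ⋀[K]^2 W, B x y = θ (wedge x y))
    (α : W →ₗ[K] W →ₗ[K] K)
    (hαalt : ∀ v, α v v = 0) (hαnd : ∀ v, (∀ w, α v w = 0) → v = 0)
    (αt : ⋀[K]^2 W →ₗ[K] K)
    (hαt : ∀ (x : ⋀[K]^2 W) (v w : W),
      (x : ExteriorAlgebra K W) = ExteriorAlgebra.ι K v * ExteriorAlgebra.ι K w →
      αt x = α v w) :
    ∀ ω : ⋀[K]^2 W,
      (ω ∈ LinearMap.ker αt ∧ B ω ω = 0) ↔
      ∃ v w : W,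
        (ω : ExteriorAlgebra K W) = ExteriorAlgebra.ι K v * ExteriorAlgebra.ι K w ∧
        α v w = 0 :=
  stmt_9_general K hK2 W hW wedge hwedge θ hθ B hB α αt hαt
end

section
/- Let ι : E* ⊗ ⋀²E → E be the linear map determined by ι(f ⊗ (u ∧ v)) = f(u)·v − f(v)·u, and let Φ := id_E ⊗ ι : E ⊗ (E* ⊗ ⋀²E) → E ⊗ E. Then: (i) Φ is a linear isomorphism; (ii) for every ω ∈ ⋀²E, Φ(C ⊗ ω) = a(ω), where C ∈ E ⊗ E* is the canonical coevaluation element corresponding to the identity endomorphism Id_E and a : ⋀²E → E ⊗ E is the linear map determined by a(u ∧ v) = u ⊗ v − v ⊗ u; (iii) Φ maps (K·C) ⊗ ⋀²E onto the subspace of antisymmetric tensors of E ⊗ E, and maps End₀ ⊗ ⋀²E onto the subspace of symmetric tensors of E ⊗ E, where End₀ ⊆ E ⊗ E* is the subspace corresponding to traceless endomorphisms (the kernel of the evaluation map E ⊗ E* → K). -/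
/-!
Fix a basis `e₀, e₁` of `E`. Then `ω₀ = e₀ ∧ e₁` spans `⋀²E`, and
`Φ (c ⊗ ω₀) = A e₀ ⊗ e₁ - A e₁ ⊗ e₀` where `A` is the endomorphism attached to `c`.
The map `ι` hits `e₀` and `e₁`, and `E* ⊗ ⋀²E` has dimension `2 · 1 = dim E`, so `ι` and hence
`Φ` are bijective; `A = Id` gives `Φ (C ⊗ ω) = a ω`, which is antisymmetric. Writing
`A eᵢ` in the basis shows that `A e₀ ⊗ e₁ - A e₁ ⊗ e₀` is symmetric when `tr A = 0`, and
`ev = tr ∘ hom`, so `Φ` sends `End₀ ⊗ ⋀²E` into the symmetric tensors. Since `ev C = 2 ≠ 0`,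
the two pieces span the source, while symmetric and antisymmetric tensors meet only in `0`;
surjectivity of `Φ` turns both inclusions into equalities.
-/

open TensorProduct

theorem Submodule.map_eq_of_sup_eq_top_of_disjoint {R M N : Type*} [Ring R] [AddCommGroup M]
    [Module R M] [AddCommGroup N] [Module R N] {f : M →ₗ[R] N} (hf : Function.Surjective f)
    {A B : Submodule R M} {P Q : Submodule R N} (hAB : A ⊔ B = ⊤) (hPQ : Disjoint P Q)
    (hA : A.map f ≤ P) (hB : B.map f ≤ Q) : A.map f = P := by
  refine le_antisymm hA fun x hx => ?_
  obtain ⟨y, rfl⟩ := hf x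
  obtain ⟨a, ha, b, hb, rfl⟩ := Submodule.mem_sup.mp (hAB ▸ Submodule.mem_top : y ∈ A ⊔ B)
  have hfb : f b ∈ P ⊓ Q :=
    ⟨by simpa using sub_mem hx (hA ⟨a, ha, rfl⟩), hB ⟨b, hb, rfl⟩⟩
  rw [hPQ.eq_bot, Submodule.mem_bot] at hfb
  rw [map_add, hfb, add_zero]
  exact Submodule.mem_map_of_mem ha

theorem LinearMap.disjoint_ker_add_id_ker_sub_id {K V : Type*} [Field K] [AddCommGroup V]
    [Module K V] (hK2 : (2 : K) ≠ 0) (τ : V →ₗ[K] V) :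
    Disjoint (ker (τ + id)) (ker (τ - id)) := by
  rw [Submodule.disjoint_def]
  intro x hplus hminus
  rw [mem_ker, add_apply, id_apply] at hplus
  rw [mem_ker, sub_apply, id_apply] at hminus
  have h2x : (2 : K) • x = 0 :=
    calc (2 : K) • x = (τ x + x) - (τ x - x) := by rw [two_smul]; abel
      _ = 0 := by rw [hplus, hminus, sub_zero]
  exact (smul_eq_zero.mp h2x).resolve_left hK2

theorem TensorProduct.span_tmul_sup_span_ker_tmul_eq_top {K M N : Type*} [Field K]
    [AddCommGroup M] [Module K M] [AddCommGroup N] [Module K N] {ev : M →ₗ[K] K} {C : M}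
    (hC : ev C ≠ 0) :
    Submodule.span K {x : M ⊗[K] N | ∃ n, x = C ⊗ₜ n} ⊔
      Submodule.span K {x : M ⊗[K] N | ∃ c ∈ LinearMap.ker ev, ∃ n, x = c ⊗ₜ n} = ⊤ := by
  rw [eq_top_iff, ← TensorProduct.span_tmul_eq_top, Submodule.span_le]
  rintro _ ⟨m, n, rfl⟩
  set t := ev m / ev C
  have hm : m = t • C + (m - t • C) := by abel
  rw [hm, add_tmul]
  refine add_mem (Submodule.mem_sup_left (Submodule.subset_span ⟨t • n, by rw [smul_tmul]⟩))
    (Submodule.mem_sup_right (Submodule.subset_span ⟨_, ?_, n, rfl⟩))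
  simp [t, div_mul_cancel₀ _ hC]

theorem exteriorPower.coe_ιMulti_two {R M : Type*} [CommRing R] [AddCommGroup M] [Module R M]
    (v : Fin 2 → M) :
    (exteriorPower.ιMulti R 2 v : ExteriorAlgebra R M) =
      ExteriorAlgebra.ι R (v 0) * ExteriorAlgebra.ι R (v 1) := by
  simp [ExteriorAlgebra.ιMulti_apply, Matrix.vecTail]

theorem exteriorPower.exists_smul_ιMulti_basis_two {R M : Type*} [CommRing R] [AddCommGroup M]
    [Module R M] (b : Module.Basis (Fin 2) R M) (ω : ⋀[R]^2 M) :
    ∃ a : R, a • exteriorPower.ιMulti R 2 b = ω := by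
  suffices Submodule.span R {exteriorPower.ιMulti R 2 b} = ⊤ from
    Submodule.mem_span_singleton.mp (this ▸ Submodule.mem_top)
  have hb : ![b 0, b 1] = b := by ext k; fin_cases k <;> rfl
  have hswap : ![b 1, b 0] = b ∘ Equiv.swap 0 1 := by ext k; fin_cases k <;> rfl
  have key : ∀ i j : Fin 2,
      exteriorPower.ιMulti R 2 ![b i, b j] ∈ R ∙ exteriorPower.ιMulti R 2 b := by
    intro i j
    by_cases hij : i = j
    · rw [hij, AlternatingMap.map_eq_zero_of_eq _ ![b j, b j] (i := 0) (j := 1) rfl (by decide)]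
      exact zero_mem _
    · obtain ⟨rfl, rfl⟩ | ⟨rfl, rfl⟩ : i = 0 ∧ j = 1 ∨ i = 1 ∧ j = 0 := by omega
      · rw [hb]; exact Submodule.mem_span_singleton_self _
      · rw [hswap, AlternatingMap.map_swap _ _ (by decide)]
        exact neg_mem (Submodule.mem_span_singleton_self _)
  rw [eq_top_iff, ← exteriorPower.ιMulti_span_of_span (hs := b.span_eq), Submodule.span_le]
  rintro _ ⟨a, ha, rfl⟩
  obtain ⟨i, hi⟩ := ha ⟨0, rfl⟩
  obtain ⟨j, hj⟩ := ha ⟨1, rfl⟩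
  obtain rfl : a = ![b i, b j] := by ext k; fin_cases k <;> simp [hi, hj]
  exact key i j

section DimensionTwo

variable {K E : Type*} [Field K] [AddCommGroup E] [Module K E]

theorem LinearMap.trace_comp_eq_of_apply_tmul [FiniteDimensional K E]
    {hom : E ⊗[K] Module.Dual K E →ₗ[K] (E →ₗ[K] E)}
    (hhom : ∀ (u : E) (f : Module.Dual K E) (x : E), hom (u ⊗ₜ[K] f) x = f x • u)
    {ev : E ⊗[K] Module.Dual K E →ₗ[K] K}
    (hev : ∀ (u : E) (f : Module.Dual K E), ev (u ⊗ₜ[K] f) = f u) :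
    trace K E ∘ₗ hom = ev := TensorProduct.ext' fun u f => by
  rw [comp_apply, hev, show hom (u ⊗ₜ f) = f.smulRight u from ext (hhom u f), trace_smulRight]

theorem LinearMap.comm_tmul_sub_tmul_of_trace_eq_zero (b : Module.Basis (Fin 2) K E)
    {A : E →ₗ[K] E} (hA : trace K E A = 0) :
    TensorProduct.comm K E E (A (b 0) ⊗ₜ b 1 - A (b 1) ⊗ₜ b 0) =
      A (b 0) ⊗ₜ b 1 - A (b 1) ⊗ₜ b 0 := by
  have h0 := b.sum_repr (A (b 0))
  have h1 := b.sum_repr (A (b 1))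
  rw [trace_eq_matrix_trace K b, Matrix.trace_fin_two, toMatrix_apply, toMatrix_apply] at hA
  rw [Fin.sum_univ_two] at h0 h1
  generalize b.repr (A (b 0)) 0 = p, b.repr (A (b 0)) 1 = q, b.repr (A (b 1)) 0 = r,
    b.repr (A (b 1)) 1 = s at h0 h1 hA
  rw [← h0, ← h1, eq_neg_of_add_eq_zero_right hA]
  simp only [add_tmul, ← smul_tmul', map_sub, map_add, map_smul, comm_tmul]
  module

def IsWedgeContraction (iot : Module.Dual K E ⊗[K] (⋀[K]^2 E) →ₗ[K] E) : Prop :=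
  ∀ (f : Module.Dual K E) (x : ⋀[K]^2 E) (u v : E),
    (x : ExteriorAlgebra K E) = ExteriorAlgebra.ι K u * ExteriorAlgebra.ι K v →
    iot (f ⊗ₜ[K] x) = f u • v - f v • u

theorem IsWedgeContraction.bijective {iot : Module.Dual K E ⊗[K] (⋀[K]^2 E) →ₗ[K] E}
    (hiot : IsWedgeContraction iot) (b : Module.Basis (Fin 2) K E) :
    Function.Bijective iot := by
  have : FiniteDimensional K E := b.finiteDimensional_of_finite
  have hval (f : Module.Dual K E) :
      iot (f ⊗ₜ exteriorPower.ιMulti K 2 b) = f (b 0) • b 1 - f (b 1) • b 0 :=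
    hiot _ _ _ _ (exteriorPower.coe_ιMulti_two b)
  have hsurj : Function.Surjective iot := by
    rw [← LinearMap.range_eq_top, eq_top_iff, ← b.span_eq, Submodule.span_le]
    rintro _ ⟨i, rfl⟩
    fin_cases i
    · exact ⟨(-b.coord 1) ⊗ₜ exteriorPower.ιMulti K 2 b, by rw [hval]; simp⟩
    · exact ⟨b.coord 0 ⊗ₜ exteriorPower.ιMulti K 2 b, by rw [hval]; simp⟩
  have hrank : Module.finrank K (Module.Dual K E ⊗[K] (⋀[K]^2 E)) = Module.finrank K E := by
    rw [Module.finrank_tensorProduct, Subspace.dual_finrank_eq, exteriorPower.finrank_eq,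
      Module.finrank_eq_card_basis b]
    simp
  exact ⟨(LinearMap.injective_iff_surjective_of_finrank_eq_finrank
    (V := Module.Dual K E ⊗[K] (⋀[K]^2 E)) (f := iot) hrank).mpr hsurj, hsurj⟩

theorem IsWedgeContraction.map_id_assoc_tmul_ιMulti_two
    {iot : Module.Dual K E ⊗[K] (⋀[K]^2 E) →ₗ[K] E} (hiot : IsWedgeContraction iot)
    {hom : E ⊗[K] Module.Dual K E →ₗ[K] (E →ₗ[K] E)}
    (hhom : ∀ (u : E) (f : Module.Dual K E) (x : E), hom (u ⊗ₜ[K] f) x = f x • u)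
    (v : Fin 2 → E) (c : E ⊗[K] Module.Dual K E) :
    TensorProduct.map LinearMap.id iot
        (TensorProduct.assoc K E (Module.Dual K E) (⋀[K]^2 E)
          (c ⊗ₜ exteriorPower.ιMulti K 2 v)) =
      hom c (v 0) ⊗ₜ v 1 - hom c (v 1) ⊗ₜ v 0 := by
  induction c using TensorProduct.induction_on with
  | zero => simp
  | tmul u f =>
    rw [assoc_tmul, map_tmul, hiot _ _ _ _ (exteriorPower.coe_ιMulti_two v), hhom, hhom,
      LinearMap.id_apply, tmul_sub, tmul_smul, tmul_smul, smul_tmul', smul_tmul']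
  | add c d hc hd =>
    rw [add_tmul, map_add, map_add, hc, hd, map_add, LinearMap.add_apply, LinearMap.add_apply,
      add_tmul, add_tmul]
    abel

theorem IsWedgeContraction.map_id_assoc_tmul_of_hom_eq_id
    {iot : Module.Dual K E ⊗[K] (⋀[K]^2 E) →ₗ[K] E} (hiot : IsWedgeContraction iot)
    (b : Module.Basis (Fin 2) K E)
    {hom : E ⊗[K] Module.Dual K E →ₗ[K] (E →ₗ[K] E)}
    (hhom : ∀ (u : E) (f : Module.Dual K E) (x : E), hom (u ⊗ₜ[K] f) x = f x • u)
    {C : E ⊗[K] Module.Dual K E} (hC : hom C = LinearMap.id)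
    {amap : ⋀[K]^2 E →ₗ[K] E ⊗[K] E}
    (hamap : ∀ (x : ⋀[K]^2 E) (u v : E),
      (x : ExteriorAlgebra K E) = ExteriorAlgebra.ι K u * ExteriorAlgebra.ι K v →
      amap x = u ⊗ₜ[K] v - v ⊗ₜ[K] u)
    (ω : ⋀[K]^2 E) :
    TensorProduct.map LinearMap.id iot
      (TensorProduct.assoc K E (Module.Dual K E) (⋀[K]^2 E) (C ⊗ₜ ω)) = amap ω := by
  obtain ⟨a, rfl⟩ := exteriorPower.exists_smul_ιMulti_basis_two b ω
  rw [tmul_smul, map_smul, map_smul, map_smul, hiot.map_id_assoc_tmul_ιMulti_two hhom, hC,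
    hamap _ _ _ (exteriorPower.coe_ιMulti_two b)]
  rfl

theorem IsWedgeContraction.comm_map_id_assoc_tmul_of_trace_eq_zero
    {iot : Module.Dual K E ⊗[K] (⋀[K]^2 E) →ₗ[K] E} (hiot : IsWedgeContraction iot)
    (b : Module.Basis (Fin 2) K E)
    {hom : E ⊗[K] Module.Dual K E →ₗ[K] (E →ₗ[K] E)}
    (hhom : ∀ (u : E) (f : Module.Dual K E) (x : E), hom (u ⊗ₜ[K] f) x = f x • u)
    {c : E ⊗[K] Module.Dual K E} (hc : LinearMap.trace K E (hom c) = 0) (ω : ⋀[K]^2 E) :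
    TensorProduct.comm K E E (TensorProduct.map LinearMap.id iot
        (TensorProduct.assoc K E (Module.Dual K E) (⋀[K]^2 E) (c ⊗ₜ ω))) =
      TensorProduct.map LinearMap.id iot
        (TensorProduct.assoc K E (Module.Dual K E) (⋀[K]^2 E) (c ⊗ₜ ω)) := by
  obtain ⟨a, rfl⟩ := exteriorPower.exists_smul_ιMulti_basis_two b ω
  rw [tmul_smul, map_smul, map_smul, map_smul, hiot.map_id_assoc_tmul_ιMulti_two hhom,
    LinearMap.comm_tmul_sub_tmul_of_trace_eq_zero b hc]

end DimensionTwo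

/-- Let `E` be 2-dimensional, `ι : E* ⊗ ⋀²E → E` the map `f ⊗ (u ∧ v) ↦ f(u)·v − f(v)·u`, and
`Φ = id_E ⊗ ι : E ⊗ (E* ⊗ ⋀²E) → E ⊗ E`. Then: (i) `Φ` is a linear isomorphism; (ii) for every
`ω ∈ ⋀²E`, `Φ(C ⊗ ω) = a(ω)`, where `C ∈ E ⊗ E*` is the coevaluation element corresponding to
`Id_E` and `a(u ∧ v) = u ⊗ v − v ⊗ u`; (iii) `Φ` maps `(K·C) ⊗ ⋀²E` onto the antisymmetric
tensors and maps `End₀ ⊗ ⋀²E` (traceless part, kernel of evaluation) onto the symmetric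
tensors. -/
theorem stmt_16 (K : Type*) [Field K] (hK2 : (2 : K) ≠ 0)
    (E : Type*) [AddCommGroup E] [Module K E] [FiniteDimensional K E]
    (hE : Module.finrank K E = 2)
    (iot : Module.Dual K E ⊗[K] (⋀[K]^2 E) →ₗ[K] E)
    (hiot : ∀ (f : Module.Dual K E) (x : ⋀[K]^2 E) (u v : E),
      (x : ExteriorAlgebra K E) = ExteriorAlgebra.ι K u * ExteriorAlgebra.ι K v →
      iot (f ⊗ₜ[K] x) = f u • v - f v • u)
    (hom : E ⊗[K] Module.Dual K E →ₗ[K] (E →ₗ[K] E))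
    (hhom : ∀ (u : E) (f : Module.Dual K E) (x : E), hom (u ⊗ₜ[K] f) x = f x • u)
    (C : E ⊗[K] Module.Dual K E) (hC : hom C = LinearMap.id)
    (ev : E ⊗[K] Module.Dual K E →ₗ[K] K)
    (hev : ∀ (u : E) (f : Module.Dual K E), ev (u ⊗ₜ[K] f) = f u)
    (amap : ⋀[K]^2 E →ₗ[K] E ⊗[K] E)
    (hamap : ∀ (x : ⋀[K]^2 E) (u v : E),
      (x : ExteriorAlgebra K E) = ExteriorAlgebra.ι K u * ExteriorAlgebra.ι K v →
      amap x = u ⊗ₜ[K] v - v ⊗ₜ[K] u)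
    (τ : E ⊗[K] E →ₗ[K] E ⊗[K] E)
    (hτ : ∀ x y : E, τ (x ⊗ₜ[K] y) = y ⊗ₜ[K] x) :
    Function.Bijective (TensorProduct.map (LinearMap.id : E →ₗ[K] E) iot) ∧
    (∀ ω : ⋀[K]^2 E,
      TensorProduct.map (LinearMap.id : E →ₗ[K] E) iot
        (TensorProduct.assoc K E (Module.Dual K E) (⋀[K]^2 E) (C ⊗ₜ[K] ω)) = amap ω) ∧
    Submodule.map ((TensorProduct.map (LinearMap.id : E →ₗ[K] E) iot).comp
        (TensorProduct.assoc K E (Module.Dual K E) (⋀[K]^2 E)).toLinearMap)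
      (Submodule.span K {x : (E ⊗[K] Module.Dual K E) ⊗[K] (⋀[K]^2 E) |
        ∃ ω : ⋀[K]^2 E, x = C ⊗ₜ[K] ω})
      = LinearMap.ker (τ + LinearMap.id) ∧
    Submodule.map ((TensorProduct.map (LinearMap.id : E →ₗ[K] E) iot).comp
        (TensorProduct.assoc K E (Module.Dual K E) (⋀[K]^2 E)).toLinearMap)
      (Submodule.span K {x : (E ⊗[K] Module.Dual K E) ⊗[K] (⋀[K]^2 E) |
        ∃ c ∈ LinearMap.ker ev, ∃ ω : ⋀[K]^2 E, x = c ⊗ₜ[K] ω})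
      = LinearMap.ker (τ - LinearMap.id) := by
  obtain ⟨b⟩ : Nonempty (Module.Basis (Fin 2) K E) := ⟨Module.finBasisOfFinrankEq K E hE⟩
  obtain rfl : τ = (TensorProduct.comm K E E).toLinearMap := TensorProduct.ext' hτ
  set Ψ := (TensorProduct.map (LinearMap.id : E →ₗ[K] E) iot).comp
    (TensorProduct.assoc K E (Module.Dual K E) (⋀[K]^2 E)).toLinearMap
  have hbij : Function.Bijective (TensorProduct.map (LinearMap.id : E →ₗ[K] E) iot) :=
    TensorProduct.map_bijective Function.bijective_id (IsWedgeContraction.bijective hiot b)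
  have hcoev := IsWedgeContraction.map_id_assoc_tmul_of_hom_eq_id hiot b hhom hC hamap
  have htrace := LinearMap.trace_comp_eq_of_apply_tmul hhom hev
  have hevC : ev C ≠ 0 := by
    rwa [← htrace, LinearMap.comp_apply, hC, LinearMap.trace_id, hE, Nat.cast_ofNat]
  have hanti : Submodule.map Ψ (Submodule.span K {x | ∃ ω, x = C ⊗ₜ[K] ω}) ≤
      LinearMap.ker ((TensorProduct.comm K E E).toLinearMap + LinearMap.id) := by
    rw [Submodule.map_span_le]
    rintro _ ⟨ω, rfl⟩
    obtain ⟨a, rfl⟩ := exteriorPower.exists_smul_ιMulti_basis_two b ω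
    simp [Ψ, hcoev, hamap _ _ _ (exteriorPower.coe_ιMulti_two b)]
  have hsym : Submodule.map Ψ (Submodule.span K {x | ∃ c ∈ LinearMap.ker ev, ∃ ω, x = c ⊗ₜ[K] ω}) ≤
      LinearMap.ker ((TensorProduct.comm K E E).toLinearMap - LinearMap.id) := by
    rw [Submodule.map_span_le]
    rintro _ ⟨c, hc, ω, rfl⟩
    rw [LinearMap.mem_ker, ← htrace] at hc
    simp [Ψ, IsWedgeContraction.comm_map_id_assoc_tmul_of_trace_eq_zero hiot b hhom hc]
  have hsurj := hbij.2.comp (TensorProduct.assoc K E (Module.Dual K E) (⋀[K]^2 E)).surjective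
  have hsup := TensorProduct.span_tmul_sup_span_ker_tmul_eq_top (N := ⋀[K]^2 E) hevC
  have hdisj := LinearMap.disjoint_ker_add_id_ker_sub_id hK2 (TensorProduct.comm K E E).toLinearMap
  exact ⟨hbij, hcoev, Submodule.map_eq_of_sup_eq_top_of_disjoint hsurj hsup hdisj hanti hsym,
    Submodule.map_eq_of_sup_eq_top_of_disjoint hsurj ((sup_comm _ _).trans hsup) hdisj.symm
      hsym hanti⟩
end
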